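/- Under the null hypothesis of mutual independence of the components of X and the MCAR mechanism, for each fixed n ≥ 4 the sequence {Y_{n,k}, F_{n,k} : 2 ≤ k ≤ d} is a martingale difference array; that is, Y_{n,k} is F_{n,k}-measurable and E(Y_{n,k} | F_{n,k−1}) = 0 almost surely for every k. -/

import Mathlib

open MeasureTheory ProbabilityTheory Filter Finset

namespace KendallMissing

/-- Setup: `X i k` is the `k`-th component of the `i`-th observation, `R i k` the
corresponding response (missingness) indicator with `P(R i k = 1) = q k` (MCAR,
Bernoulli, independent across cells and of the data).  Under the null hypothesis `H₀`
of total (mutual) independence of the components, together with the i.i.d. sampling,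
the whole family `{X i k} ∪ {R i k}` is mutually independent, the `X i k` are
identically distributed in `i`, and the marginals are continuous (atomless). -/
structure Setup {Ω : Type*} [MeasurableSpace Ω] (μ : Measure Ω)
    (X R : ℕ → ℕ → Ω → ℝ) (q : ℕ → ℝ) : Prop where
  isProb : IsProbabilityMeasure μ
  measX : ∀ i k, Measurable (X i k)
  measR : ∀ i k, Measurable (R i k)
  indep : iIndepFun
      (fun (p : (ℕ × ℕ) × Bool) => if p.2 then R p.1.1 p.1.2 else X p.1.1 p.1.2) μ
  identX : ∀ i k, μ.map (X i k) = μ.map (X 0 k)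
  contX : ∀ i k (x : ℝ), μ {ω | X i k ω = x} = 0
  Rval : ∀ i k ω, R i k ω = 0 ∨ R i k ω = 1
  Rq : ∀ i k, μ {ω | R i k ω = 1} = ENNReal.ofReal (q k)
  q_nonneg : ∀ k, 0 ≤ q k
  q_le_one : ∀ k, q k ≤ 1

variable {Ω : Type*} [MeasurableSpace Ω]

/-- Expectation of a real random variable. -/
noncomputable def mean (μ : Measure Ω) (f : Ω → ℝ) : ℝ := ∫ ω, f ω ∂μ

/-- Variance of a real random variable. -/
noncomputable def var (μ : Measure Ω) (f : Ω → ℝ) : ℝ :=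
  ∫ ω, (f ω - mean μ f) ^ 2 ∂μ

/-- Covariance of two real random variables. -/
noncomputable def cov (μ : Measure Ω) (f g : Ω → ℝ) : ℝ :=
  ∫ ω, (f ω - mean μ f) * (g ω - mean μ g) ∂μ

/-- Completeness indicator `S i = ∏_{k<d} R i k` of the `i`-th observation. -/
noncomputable def Scomp (R : ℕ → ℕ → Ω → ℝ) (d i : ℕ) (ω : Ω) : ℝ :=
  ∏ k ∈ range d, R i k ω

/-- Complete-case Kendall tau `τ_kl^cc`. -/
noncomputable def tauCC (X R : ℕ → ℕ → Ω → ℝ) (n d k l : ℕ) (ω : Ω) : ℝ :=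
  2 / ((n : ℝ) * ((n : ℝ) - 1)) *
    ∑ i ∈ range n, ∑ j ∈ range i,
      Real.sign (X i k ω - X j k ω) * Real.sign (X i l ω - X j l ω) *
        (Scomp R d i ω * Scomp R d j ω)

/-- Complete-case test statistic `T_nd^cc = Σ_{l<k<d} (τ_kl^cc)²`. -/
noncomputable def TCC (X R : ℕ → ℕ → Ω → ℝ) (n d : ℕ) (ω : Ω) : ℝ :=
  ∑ k ∈ range d, ∑ l ∈ range k, (tauCC X R n d k l ω) ^ 2

/-- Pairwise (cell-wise) Kendall tau `τ̃_kl`. -/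
noncomputable def tauP (X R : ℕ → ℕ → Ω → ℝ) (n k l : ℕ) (ω : Ω) : ℝ :=
  2 / ((n : ℝ) * ((n : ℝ) - 1)) *
    ∑ i ∈ range n, ∑ j ∈ range i,
      Real.sign (X i k ω - X j k ω) * Real.sign (X i l ω - X j l ω) *
        (R i k ω * R j k ω * R i l ω * R j l ω)

/-- Pairwise test statistic `T̃_nd = Σ_{l<k<d} τ̃_kl²`. -/
noncomputable def Ttilde (X R : ℕ → ℕ → Ω → ℝ) (n d : ℕ) (ω : Ω) : ℝ :=
  ∑ k ∈ range d, ∑ l ∈ range k, (tauP X R n k l ω) ^ 2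

/-- The kernel `f_k(i,j) = sgn(X_ik - X_jk) R_ik R_jk`. -/
noncomputable def fker (X R : ℕ → ℕ → Ω → ℝ) (k i j : ℕ) (ω : Ω) : ℝ :=
  Real.sign (X i k ω - X j k ω) * (R i k ω * R j k ω)

/-- The `U`-statistic
`U_kl = (n(n-1)(n-2)(n-3))⁻¹ Σ_{i₁≠i₂≠i₃≠i₄} f_k(i₁,i₂) f_l(i₁,i₂) f_k(i₃,i₄) f_l(i₃,i₄)`,
the sum being over quadruples of pairwise distinct indices. -/
noncomputable def Ustat (X R : ℕ → ℕ → Ω → ℝ) (n k l : ℕ) (ω : Ω) : ℝ :=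
  (1 / ((n : ℝ) * ((n : ℝ) - 1) * ((n : ℝ) - 2) * ((n : ℝ) - 3))) *
    ∑ i1 ∈ range n, ∑ i2 ∈ range n, ∑ i3 ∈ range n, ∑ i4 ∈ range n,
      if i1 ≠ i2 ∧ i1 ≠ i3 ∧ i1 ≠ i4 ∧ i2 ≠ i3 ∧ i2 ≠ i4 ∧ i3 ≠ i4 then
        fker X R k i1 i2 ω * fker X R l i1 i2 ω * fker X R k i3 i4 ω * fker X R l i3 i4 ω
      else 0

/-- The `U`-statistic based test statistic `T̂_nd = Σ_{l<k<d} U_kl`. -/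
noncomputable def That (X R : ℕ → ℕ → Ω → ℝ) (n d : ℕ) (ω : Ω) : ℝ :=
  ∑ k ∈ range d, ∑ l ∈ range k, Ustat X R n k l ω

/-- The martingale-difference summands `Y_{n,k} = (2/√Var(T̂_nd)) Σ_{l<k} U_kl`. -/
noncomputable def Y (μ : Measure Ω) (X R : ℕ → ℕ → Ω → ℝ) (n d k : ℕ) (ω : Ω) : ℝ :=
  (2 / Real.sqrt (var μ (That X R n d))) * ∑ l ∈ range k, Ustat X R n k l ω

/-- The σ-field `F_{m,t} = σ{(X i j, R i j) : i < m, j < t}` (0-indexed). -/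
def Fsig (X R : ℕ → ℕ → Ω → ℝ) (m t : ℕ) : MeasurableSpace Ω :=
  ⨆ i ∈ Finset.range m, ⨆ j ∈ Finset.range t,
    (MeasurableSpace.comap (X i j) inferInstance ⊔ MeasurableSpace.comap (R i j) inferInstance)

end KendallMissing

/-!
Every summand `f_k(i₁,i₂) f_l(i₁,i₂) f_k(i₃,i₄) f_l(i₃,i₄)` of `U_kl` with `l < k` splits as
`[f_l(i₁,i₂) f_l(i₃,i₄)] · [f_k(i₁,i₂) f_k(i₃,i₄)]`. The first factor is `F_{n,k}`-measurable;
the second is a function of column `k`, which is independent of `F_{n,k}`, so the conditional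
expectation is the first factor times `E[f_k(i₁,i₂) f_k(i₃,i₄)]`. For distinct indices the two
kernels are independent, and `E f_k(i,j) = E sgn(X_ik - X_jk) · E[R_ik R_jk] = 0` because the
pair `(X_ik, X_jk)` is exchangeable.
-/

namespace KendallMissing

section

variable {Ω : Type*} {mΩ : MeasurableSpace Ω} {μ : Measure Ω}

lemma measurable_realSign : Measurable Real.sign :=
  Measurable.ite (measurableSet_lt measurable_id measurable_const) measurable_const
    (Measurable.ite (measurableSet_lt measurable_const measurable_id) measurable_const
      measurable_const)

lemma abs_mul_le_one {a b : ℝ} (ha : |a| ≤ 1) (hb : |b| ≤ 1) : |a * b| ≤ 1 := by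
  rw [abs_mul]
  exact mul_le_one₀ ha (abs_nonneg b) hb

/-- `(A, B)` and `(B, A)` have the same law, while `sign (a - b)` is odd under the swap. -/
lemma integral_sign_sub_eq_zero [IsFiniteMeasure μ] {A B : Ω → ℝ}
    (hAB : IdentDistrib A B μ μ) (hind : IndepFun A B μ) :
    ∫ ω, Real.sign (A ω - B ω) ∂μ = 0 := by
  have hswap : IdentDistrib (fun ω => (A ω, B ω)) (fun ω => (B ω, A ω)) μ μ :=
    hAB.prodMk hAB.symm hind hind.symm
  have hodd : ∫ ω, Real.sign (A ω - B ω) ∂μ = ∫ ω, Real.sign (B ω - A ω) ∂μ :=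
    (hswap.comp (measurable_realSign.comp (measurable_fst.sub measurable_snd))).integral_eq
  simp_rw [← neg_sub (A _), Real.sign_neg, integral_neg] at hodd
  linarith

lemma condExp_mul_eq_zero_of_indep [IsProbabilityMeasure μ] {m m' : MeasurableSpace Ω}
    (hm : m ≤ mΩ) (hm' : m' ≤ mΩ) (hind : Indep m' m μ) {g h : Ω → ℝ}
    (hg : StronglyMeasurable[m] g) (hh : StronglyMeasurable[m'] h)
    (hgh : Integrable (g * h) μ) (hint : Integrable h μ) (h0 : ∫ ω, h ω ∂μ = 0) :
    μ[g * h | m] =ᵐ[μ] 0 := by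
  filter_upwards [condExp_mul_of_stronglyMeasurable_left hg hgh hint,
    condExp_indep_eq hm' hm hh hind] with ω hpull hconst
  simp only [hpull, Pi.mul_apply, hconst, h0, mul_zero, Pi.zero_apply]

lemma condExp_smul_finsetSum_eq_zero {ι : Type*} {s : Finset ι} {f : ι → Ω → ℝ}
    {m : MeasurableSpace Ω} (c : ℝ) (hf : ∀ i ∈ s, Integrable (f i) μ)
    (h0 : ∀ i ∈ s, μ[f i | m] =ᵐ[μ] 0) :
    μ[c • ∑ i ∈ s, f i | m] =ᵐ[μ] 0 := by
  have hall : ∀ᵐ ω ∂μ, ∀ i ∈ s, μ[f i | m] ω = 0 :=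
    (eventually_all_finset s).2 h0
  filter_upwards [condExp_smul c (∑ i ∈ s, f i) m, condExp_finsetSum hf m, hall]
    with ω hsmul hsum hzero
  rw [hsmul, Pi.smul_apply, hsum, Finset.sum_apply, Finset.sum_eq_zero hzero, smul_zero,
    Pi.zero_apply]

end

section

variable {Ω : Type*} {mΩ : MeasurableSpace Ω} {μ : Measure Ω} {X R : ℕ → ℕ → Ω → ℝ}
  {q : ℕ → ℝ}

/-- The cells of the data array, indexed as in `Setup.indep`. -/
def cell (X R : ℕ → ℕ → Ω → ℝ) (p : (ℕ × ℕ) × Bool) : Ω → ℝ :=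
  if p.2 then R p.1.1 p.1.2 else X p.1.1 p.1.2

def cellSigma (X R : ℕ → ℕ → Ω → ℝ) (S : Set ((ℕ × ℕ) × Bool)) : MeasurableSpace Ω :=
  ⨆ p ∈ S, MeasurableSpace.comap (cell X R p) inferInstance

lemma Setup.measurable_cell (hs : Setup μ X R q) : ∀ p, Measurable (cell X R p)
  | ((i, j), false) => hs.measX i j
  | ((i, j), true) => hs.measR i j

lemma Setup.cellSigma_le (hs : Setup μ X R q) (S : Set ((ℕ × ℕ) × Bool)) :
    cellSigma X R S ≤ mΩ :=
  iSup₂_le fun p _ => (hs.measurable_cell p).comap_le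

lemma comap_cell_le_cellSigma {S : Set ((ℕ × ℕ) × Bool)} {p : (ℕ × ℕ) × Bool} (hp : p ∈ S) :
    MeasurableSpace.comap (cell X R p) inferInstance ≤ cellSigma X R S :=
  le_iSup₂ (f := fun p (_ : p ∈ S) => MeasurableSpace.comap (cell X R p) inferInstance) p hp

lemma measurable_cell_cellSigma {S : Set ((ℕ × ℕ) × Bool)} {p : (ℕ × ℕ) × Bool} (hp : p ∈ S) :
    Measurable[cellSigma X R S] (cell X R p) :=
  measurable_iff_comap_le.2 (comap_cell_le_cellSigma hp)

lemma Setup.indep_cellSigma (hs : Setup μ X R q) {S T : Set ((ℕ × ℕ) × Bool)}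
    (hST : Disjoint S T) : Indep (cellSigma X R S) (cellSigma X R T) μ :=
  indep_iSup_of_disjoint (fun p => (hs.measurable_cell p).comap_le) hs.indep.iIndep hST

lemma Setup.indepFun_of_measurable_cellSigma (hs : Setup μ X R q)
    {S T : Set ((ℕ × ℕ) × Bool)} (hST : Disjoint S T) {A B : Ω → ℝ}
    (hA : Measurable[cellSigma X R S] A) (hB : Measurable[cellSigma X R T] B) :
    IndepFun A B μ :=
  indep_of_indep_of_le_right (indep_of_indep_of_le_left (hs.indep_cellSigma hST) hA.comap_le)
    hB.comap_le

lemma Fsig_eq_cellSigma (X R : ℕ → ℕ → Ω → ℝ) (m t : ℕ) :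
    Fsig X R m t = cellSigma X R {p | p.1.1 < m ∧ p.1.2 < t} := by
  apply le_antisymm
  · refine iSup₂_le fun i hi => iSup₂_le fun j hj => sup_le ?_ ?_
    · exact comap_cell_le_cellSigma (p := ((i, j), false)) ⟨mem_range.1 hi, mem_range.1 hj⟩
    · exact comap_cell_le_cellSigma (p := ((i, j), true)) ⟨mem_range.1 hi, mem_range.1 hj⟩
  · refine iSup₂_le fun ⟨⟨i, j⟩, b⟩ ⟨hi, hj⟩ => ?_
    have hcell : MeasurableSpace.comap (X i j) inferInstance
        ⊔ MeasurableSpace.comap (R i j) inferInstance ≤ Fsig X R m t :=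
      le_iSup₂_of_le i (mem_range.2 hi) (le_iSup₂_of_le j (mem_range.2 hj) le_rfl)
    cases b
    · exact le_sup_left.trans hcell
    · exact le_sup_right.trans hcell

lemma measurable_fker {m : MeasurableSpace Ω} {k i j : ℕ}
    (hXi : Measurable[m] (X i k)) (hXj : Measurable[m] (X j k))
    (hRi : Measurable[m] (R i k)) (hRj : Measurable[m] (R j k)) :
    Measurable[m] (fker X R k i j) :=
  (measurable_realSign.comp (hXi.sub hXj)).mul (hRi.mul hRj)

lemma measurable_fker_cellSigma {S : Set ((ℕ × ℕ) × Bool)} {k i j : ℕ}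
    (hi : ∀ b, ((i, k), b) ∈ S) (hj : ∀ b, ((j, k), b) ∈ S) :
    Measurable[cellSigma X R S] (fker X R k i j) :=
  measurable_fker (measurable_cell_cellSigma (hi false)) (measurable_cell_cellSigma (hj false))
    (measurable_cell_cellSigma (hi true)) (measurable_cell_cellSigma (hj true))

lemma measurable_fker_Fsig {m t k i j : ℕ} (hi : i < m) (hj : j < m) (hk : k < t) :
    Measurable[Fsig X R m t] (fker X R k i j) := by
  rw [Fsig_eq_cellSigma]
  exact measurable_fker_cellSigma (fun _ => ⟨hi, hk⟩) (fun _ => ⟨hj, hk⟩)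

lemma Setup.abs_fker_le_one (hs : Setup μ X R q) (k i j : ℕ) (ω : Ω) :
    |fker X R k i j ω| ≤ 1 := by
  have habsR : ∀ i, |R i k ω| ≤ 1 := fun i => by
    rcases hs.Rval i k ω with h | h <;> simp [h]
  refine abs_mul_le_one ?_ (abs_mul_le_one (habsR i) (habsR j))
  rcases Real.sign_apply_eq (X i k ω - X j k ω) with h | h | h <;> simp [h]

lemma Setup.integrable_of_abs_le_one (hs : Setup μ X R q) {f : Ω → ℝ} (hf : Measurable f)
    (hbound : ∀ ω, |f ω| ≤ 1) : Integrable f μ :=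
  have := hs.isProb
  .of_bound hf.aestronglyMeasurable 1 (.of_forall hbound)

lemma Setup.measurable_fker (hs : Setup μ X R q) (k i j : ℕ) : Measurable (fker X R k i j) :=
  KendallMissing.measurable_fker (hs.measX i k) (hs.measX j k) (hs.measR i k) (hs.measR j k)

lemma Setup.identDistrib_X (hs : Setup μ X R q) (i j k : ℕ) :
    IdentDistrib (X i k) (X j k) μ μ :=
  ⟨(hs.measX i k).aemeasurable, (hs.measX j k).aemeasurable,
    by rw [hs.identX i k, hs.identX j k]⟩

lemma Setup.indepFun_X (hs : Setup μ X R q) {i j : ℕ} (k : ℕ) (hij : i ≠ j) :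
    IndepFun (X i k) (X j k) μ :=
  hs.indepFun_of_measurable_cellSigma (S := {((i, k), false)}) (T := {((j, k), false)})
    (by simpa using hij) (measurable_cell_cellSigma (p := ((i, k), false)) rfl)
    (measurable_cell_cellSigma (p := ((j, k), false)) rfl)

lemma Setup.integral_fker_eq_zero (hs : Setup μ X R q) {k i j : ℕ} (hij : i ≠ j) :
    ∫ ω, fker X R k i j ω ∂μ = 0 := by
  have := hs.isProb
  let S : Set ((ℕ × ℕ) × Bool) := {p | p.1.2 = k ∧ p.2 = false}
  let T : Set ((ℕ × ℕ) × Bool) := {p | p.1.2 = k ∧ p.2 = true}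
  have hST : Disjoint S T := Set.disjoint_left.2 fun p hS hT => by simp_all [S, T]
  have hsign : Measurable[cellSigma X R S] fun ω => Real.sign (X i k ω - X j k ω) :=
    measurable_realSign.comp
      ((measurable_cell_cellSigma (S := S) (p := ((i, k), false)) ⟨rfl, rfl⟩).sub
        (measurable_cell_cellSigma (S := S) (p := ((j, k), false)) ⟨rfl, rfl⟩))
  have hresp : Measurable[cellSigma X R T] fun ω => R i k ω * R j k ω :=
    (measurable_cell_cellSigma (S := T) (p := ((i, k), true)) ⟨rfl, rfl⟩).mul
      (measurable_cell_cellSigma (S := T) (p := ((j, k), true)) ⟨rfl, rfl⟩)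
  calc ∫ ω, fker X R k i j ω ∂μ
      = (∫ ω, Real.sign (X i k ω - X j k ω) ∂μ) * ∫ ω, R i k ω * R j k ω ∂μ :=
        (hs.indepFun_of_measurable_cellSigma hST hsign hresp).integral_fun_mul_eq_mul_integral
          (hsign.mono (hs.cellSigma_le S) le_rfl).aestronglyMeasurable
          (hresp.mono (hs.cellSigma_le T) le_rfl).aestronglyMeasurable
    _ = 0 := by
      rw [integral_sign_sub_eq_zero (hs.identDistrib_X i j k) (hs.indepFun_X k hij), zero_mul]

lemma Setup.Fsig_le (hs : Setup μ X R q) (m t : ℕ) : Fsig X R m t ≤ mΩ := by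
  rw [Fsig_eq_cellSigma]
  exact hs.cellSigma_le _

lemma Setup.indep_column_Fsig (hs : Setup μ X R q) (n k : ℕ) :
    Indep (cellSigma X R {p | p.1.2 = k}) (Fsig X R n k) μ := by
  rw [Fsig_eq_cellSigma]
  exact hs.indep_cellSigma (Set.disjoint_left.2 fun _ hcol hrect => hrect.2.ne hcol)

lemma Setup.integral_fker_mul_fker_eq_zero (hs : Setup μ X R q) {k a b c d : ℕ}
    (hab : a ≠ b) (hac : a ≠ c) (had : a ≠ d) (hbc : b ≠ c) (hbd : b ≠ d) :
    ∫ ω, fker X R k a b ω * fker X R k c d ω ∂μ = 0 := by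
  have hind : IndepFun (fker X R k a b) (fker X R k c d) μ := by
    refine hs.indepFun_of_measurable_cellSigma
      (S := {p | p.1.2 = k ∧ (p.1.1 = a ∨ p.1.1 = b)})
      (T := {p | p.1.2 = k ∧ (p.1.1 = c ∨ p.1.1 = d)}) ?_
      (measurable_fker_cellSigma (fun _ => ⟨rfl, .inl rfl⟩) (fun _ => ⟨rfl, .inr rfl⟩))
      (measurable_fker_cellSigma (fun _ => ⟨rfl, .inl rfl⟩) (fun _ => ⟨rfl, .inr rfl⟩))
    refine Set.disjoint_left.2 fun p ⟨_, hab'⟩ ⟨_, hcd'⟩ => ?_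
    rcases hab' with h | h <;> rcases hcd' with h' | h' <;> simp_all
  rw [hind.integral_fun_mul_eq_mul_integral (hs.measurable_fker k a b).aestronglyMeasurable
    (hs.measurable_fker k c d).aestronglyMeasurable, hs.integral_fker_eq_zero hab, zero_mul]

def distinctQuads (n : ℕ) : Finset ((ℕ × ℕ) × ℕ × ℕ) :=
  {v ∈ (range n ×ˢ range n) ×ˢ range n ×ˢ range n |
    v.1.1 ≠ v.1.2 ∧ v.1.1 ≠ v.2.1 ∧ v.1.1 ≠ v.2.2 ∧ v.1.2 ≠ v.2.1 ∧ v.1.2 ≠ v.2.2 ∧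
      v.2.1 ≠ v.2.2}

noncomputable def ustatTerm (X R : ℕ → ℕ → Ω → ℝ) (k l : ℕ) (v : (ℕ × ℕ) × ℕ × ℕ) (ω : Ω) :
    ℝ :=
  fker X R k v.1.1 v.1.2 ω * fker X R l v.1.1 v.1.2 ω *
    fker X R k v.2.1 v.2.2 ω * fker X R l v.2.1 v.2.2 ω

lemma Ustat_eq_smul_sum (X R : ℕ → ℕ → Ω → ℝ) (n k l : ℕ) :
    Ustat X R n k l = (1 / ((n : ℝ) * ((n : ℝ) - 1) * ((n : ℝ) - 2) * ((n : ℝ) - 3))) •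
      ∑ v ∈ distinctQuads n, ustatTerm X R k l v := by
  funext ω
  simp only [Ustat, distinctQuads, ustatTerm, sum_filter, sum_product, Pi.smul_apply,
    Finset.sum_apply, ite_apply, Pi.zero_apply, smul_eq_mul]

lemma measurable_ustatTerm_Fsig {n t k l : ℕ} {v : (ℕ × ℕ) × ℕ × ℕ} (hv : v ∈ distinctQuads n)
    (hk : k < t) (hl : l < t) : Measurable[Fsig X R n t] (ustatTerm X R k l v) := by
  obtain ⟨⟨a, b⟩, c, d⟩ := v
  simp only [distinctQuads, mem_filter, mem_product, mem_range] at hv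
  obtain ⟨⟨⟨ha, hb⟩, hc, hd⟩, -⟩ := hv
  exact (((measurable_fker_Fsig ha hb hk).mul (measurable_fker_Fsig ha hb hl)).mul
    (measurable_fker_Fsig hc hd hk)).mul (measurable_fker_Fsig hc hd hl)

lemma measurable_Ustat_Fsig {n t k l : ℕ} (hk : k < t) (hl : l < t) :
    Measurable[Fsig X R n t] (Ustat X R n k l) := by
  rw [Ustat_eq_smul_sum, sum_fn]
  exact (Finset.measurable_sum _ fun v hv => measurable_ustatTerm_Fsig hv hk hl).const_smul _

lemma Setup.integrable_ustatTerm (hs : Setup μ X R q) (k l : ℕ) (v : (ℕ × ℕ) × ℕ × ℕ) :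
    Integrable (ustatTerm X R k l v) μ := by
  have hmeas := hs.measurable_fker
  have hbound := hs.abs_fker_le_one
  exact hs.integrable_of_abs_le_one
    ((((hmeas _ _ _).mul (hmeas _ _ _)).mul (hmeas _ _ _)).mul (hmeas _ _ _)) fun ω =>
      abs_mul_le_one (abs_mul_le_one (abs_mul_le_one (hbound _ _ _ ω) (hbound _ _ _ ω))
        (hbound _ _ _ ω)) (hbound _ _ _ ω)

lemma Setup.integrable_Ustat (hs : Setup μ X R q) (n k l : ℕ) :
    Integrable (Ustat X R n k l) μ := by
  rw [Ustat_eq_smul_sum]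
  exact (integrable_finsetSum' _ fun v _ => hs.integrable_ustatTerm k l v).smul (𝕜 := ℝ) _

lemma Setup.condExp_ustatTerm_eq_zero (hs : Setup μ X R q) {n k l : ℕ} (hlk : l < k)
    {v : (ℕ × ℕ) × ℕ × ℕ} (hv : v ∈ distinctQuads n) :
    μ[ustatTerm X R k l v | Fsig X R n k] =ᵐ[μ] 0 := by
  have := hs.isProb
  have hint := hs.integrable_ustatTerm k l v
  obtain ⟨⟨a, b⟩, c, d⟩ := v
  simp only [distinctQuads, mem_filter, mem_product, mem_range] at hv
  obtain ⟨⟨⟨ha, hb⟩, hc, hd⟩, hab, hac, had, hbc, hbd, -⟩ := hv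
  have hsplit : ustatTerm X R k l ((a, b), c, d) =
      (fker X R l a b * fker X R l c d) * (fker X R k a b * fker X R k c d) := by
    funext ω
    simp only [ustatTerm, Pi.mul_apply]
    ring
  have hcol : Measurable[cellSigma X R {p | p.1.2 = k}] (fker X R k a b * fker X R k c d) :=
    (measurable_fker_cellSigma (fun _ => rfl) (fun _ => rfl)).mul
      (measurable_fker_cellSigma (fun _ => rfl) (fun _ => rfl))
  have hcol_int : Integrable (fker X R k a b * fker X R k c d) μ :=
    hs.integrable_of_abs_le_one ((hs.measurable_fker k a b).mul (hs.measurable_fker k c d))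
      fun ω => abs_mul_le_one (hs.abs_fker_le_one _ _ _ ω) (hs.abs_fker_le_one _ _ _ ω)
  rw [hsplit] at hint ⊢
  exact condExp_mul_eq_zero_of_indep (hs.Fsig_le n k) (hs.cellSigma_le _)
    (hs.indep_column_Fsig n k)
    ((measurable_fker_Fsig ha hb hlk).mul (measurable_fker_Fsig hc hd hlk)).stronglyMeasurable
    hcol.stronglyMeasurable hint hcol_int (hs.integral_fker_mul_fker_eq_zero hab hac had hbc hbd)

lemma Setup.condExp_Ustat_eq_zero (hs : Setup μ X R q) {n k l : ℕ} (hlk : l < k) :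
    μ[Ustat X R n k l | Fsig X R n k] =ᵐ[μ] 0 := by
  rw [Ustat_eq_smul_sum]
  exact condExp_smul_finsetSum_eq_zero _ (fun v _ => hs.integrable_ustatTerm k l v)
    fun v hv => hs.condExp_ustatTerm_eq_zero hlk hv

end

theorem Y_martingale_difference_general {Ω : Type*} [MeasurableSpace Ω] (μ : Measure Ω)
    (X R : ℕ → ℕ → Ω → ℝ) (q : ℕ → ℝ) (hs : Setup μ X R q)
    (n d : ℕ) (k : ℕ) :
    Measurable[Fsig X R n (k + 1)] (Y μ X R n d k) ∧
      μ[Y μ X R n d k | Fsig X R n k] =ᵐ[μ] 0 := by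
  have hY : Y μ X R n d k =
      (2 / Real.sqrt (var μ (That X R n d))) • ∑ l ∈ range k, Ustat X R n k l := by
    funext ω
    simp only [Y, Pi.smul_apply, Finset.sum_apply, smul_eq_mul]
  refine ⟨?_, ?_⟩
  · exact (Finset.measurable_sum _ fun l hl =>
      measurable_Ustat_Fsig k.lt_succ_self ((mem_range.1 hl).trans k.lt_succ_self)).const_mul _
  · rw [hY]
    exact condExp_smul_finsetSum_eq_zero _ (fun l _ => hs.integrable_Ustat n k l)
      fun l hl => hs.condExp_Ustat_eq_zero (mem_range.1 hl)

/-- Under `H₀` and MCAR, for each fixed `n ≥ 4` the family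
`{Y_{n,k}, F_{n,k}}` is a martingale difference array: `Y_{n,k}` is `F_{n,k}`-measurable
and `E(Y_{n,k} | F_{n,k-1}) = 0` a.s.  (In the 0-indexed formalization, `Y μ X R n d k`
involves the columns `0,…,k`, so it is measurable w.r.t. `Fsig X R n (k+1)` and has zero
conditional expectation given `Fsig X R n k`.) -/
theorem Y_martingale_difference {Ω : Type*} [MeasurableSpace Ω] (μ : Measure Ω)
    (X R : ℕ → ℕ → Ω → ℝ) (q : ℕ → ℝ) (hs : Setup μ X R q)
    (n d : ℕ) (hn : 4 ≤ n) (k : ℕ) (hk1 : 1 ≤ k) (hkd : k < d) :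
    Measurable[Fsig X R n (k + 1)] (Y μ X R n d k) ∧
      μ[Y μ X R n d k | Fsig X R n k] =ᵐ[μ] 0 :=
  Y_martingale_difference_general μ X R q hs n d k

end KendallMissing
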